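/- Let 1 ≤ i ≤ s, write ξ_i = (k,t), and let p > k be such that the elements of M in column t are exactly {(j,t) : p ≤ j ≤ n}. Then every pair (a,j) with p ≤ a ≤ n and t < j ≤ k lies in A_{i−1} = B_{i−1} ⊔ M. -/

import Mathlib

open Finset MvPolynomial

namespace Panov

/-- The set `A` of places `(i,j)` with `n ≥ i > j ≥ 1`. -/
def placesA (n : ℕ) : Finset (ℕ × ℕ) :=
  (Finset.range (n + 1) ×ˢ Finset.range (n + 1)).filter fun p => 1 ≤ p.2 ∧ p.2 < p.1

/-- The rank of a place in the linear order `≻`: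
`η ≻ ζ` iff `ordA n η < ordA n ζ`. -/
def ordA (n : ℕ) (p : ℕ × ℕ) : ℕ := p.2 * (n + 1) + (n - p.1)

/-- The `≻`-greatest element of a (nonempty) set `B` of places:
the element with the minimal value of `ordA`. -/
def xiOf (n : ℕ) (B : Finset (ℕ × ℕ)) : ℕ × ℕ :=
  let m := WithTop.untopD 0 ((B.image (ordA n)).min)
  (n - m % (n + 1), m / (n + 1))

/-- The places that get the symbol `−` at the current step, when the
current set of unfilled places is `B`. -/
def minusSet (n : ℕ) (B : Finset (ℕ × ℕ)) : Finset (ℕ × ℕ) :=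
  B.filter fun p =>
    p.1 = (xiOf n B).1 ∧ (xiOf n B).2 < p.2 ∧ p.2 < (xiOf n B).1 ∧ (p.2, (xiOf n B).2) ∈ B

/-- The places that get the symbol `+` at the current step. -/
def plusSet (n : ℕ) (B : Finset (ℕ × ℕ)) : Finset (ℕ × ℕ) :=
  B.filter fun p =>
    p.2 = (xiOf n B).2 ∧ (xiOf n B).2 < p.1 ∧ p.1 < (xiOf n B).1 ∧ ((xiOf n B).1, p.1) ∈ B

/-- `Bset n M i` is the set of places unfilled after step `i` of the diagram. -/
def Bset (n : ℕ) (M : Finset (ℕ × ℕ)) : ℕ → Finset (ℕ × ℕ)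
  | 0 => placesA n \ M
  | i + 1 =>
      Bset n M i \
        insert (xiOf n (Bset n M i)) (minusSet n (Bset n M i) ∪ plusSet n (Bset n M i))

/-- `ξ_i`, the place that receives `⊗` at step `i ≥ 1`. -/
def xiStep (n : ℕ) (M : Finset (ℕ × ℕ)) (i : ℕ) : ℕ × ℕ := xiOf n (Bset n M (i - 1))

/-- `C_i⁻`, the places filled with `−` at step `i ≥ 1`. -/
def Cminus (n : ℕ) (M : Finset (ℕ × ℕ)) (i : ℕ) : Finset (ℕ × ℕ) :=
  minusSet n (Bset n M (i - 1))

/-- `C_i⁺`, the places filled with `+` at step `i ≥ 1`. -/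
def Cplus (n : ℕ) (M : Finset (ℕ × ℕ)) (i : ℕ) : Finset (ℕ × ℕ) :=
  plusSet n (Bset n M (i - 1))

/-- `M ⊆ A` spans an ideal `𝔪` of `𝔫 = ut(n,K)`. -/
def IsIdealSet (n : ℕ) (M : Finset (ℕ × ℕ)) : Prop :=
  M ⊆ placesA n ∧
    (∀ p ∈ M, ∀ d, 1 ≤ d → d < p.2 → (p.1, d) ∈ M) ∧
    (∀ p ∈ M, ∀ c, p.1 < c → c ≤ n → (c, p.2) ∈ M)

/-- `s` is the number of steps after which the diagram is complete. -/
def IsNumSteps (n : ℕ) (M : Finset (ℕ × ℕ)) (s : ℕ) : Prop :=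
  Bset n M s = ∅ ∧ ∀ j < s, (Bset n M j).Nonempty


section Diagram

variable {n : ℕ} {M : Finset (ℕ × ℕ)}

lemma mem_placesA {q : ℕ × ℕ} : q ∈ placesA n ↔ q.1 ≤ n ∧ 1 ≤ q.2 ∧ q.2 < q.1 := by
  simp only [placesA, Finset.mem_filter, Finset.mem_product, Finset.mem_range]
  omega

lemma ordA_decode {q : ℕ × ℕ} (hq : q ∈ placesA n) :
    (n - ordA n q % (n + 1), ordA n q / (n + 1)) = q := by
  obtain ⟨hq1, -, hq2⟩ := mem_placesA.1 hq
  have hlt : n - q.1 < n + 1 := by omega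
  rw [ordA, Nat.mul_comm, Nat.mul_add_mod, Nat.mod_eq_of_lt hlt,
    Nat.mul_add_div (Nat.succ_pos n), Nat.div_eq_of_lt hlt]
  exact Prod.ext (by omega) (Nat.add_zero _)

lemma xiOf_eq_of_mem {B : Finset (ℕ × ℕ)} (hB : B ⊆ placesA n) (hne : B.Nonempty) :
    ∃ b ∈ B, xiOf n B = b ∧ ∀ q ∈ B, ordA n b ≤ ordA n q := by
  have hne' : (B.image (ordA n)).Nonempty := hne.image _
  obtain ⟨b, hbB, hb⟩ := Finset.mem_image.1 ((B.image (ordA n)).min'_mem hne')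
  refine ⟨b, hbB, ?_, fun q hq => hb ▸ Finset.min'_le _ _ (Finset.mem_image_of_mem _ hq)⟩
  simp only [xiOf, ← Finset.coe_min' hne', WithTop.untopD_coe, ← hb]
  exact ordA_decode (hB hbB)

lemma xiOf_mem {B : Finset (ℕ × ℕ)} (hB : B ⊆ placesA n) (hne : B.Nonempty) : xiOf n B ∈ B := by
  obtain ⟨b, hbB, rfl, -⟩ := xiOf_eq_of_mem hB hne
  exact hbB

lemma ordA_xiOf_le {B : Finset (ℕ × ℕ)} (hB : B ⊆ placesA n) {q : ℕ × ℕ} (hq : q ∈ B) :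
    ordA n (xiOf n B) ≤ ordA n q := by
  obtain ⟨b, -, rfl, hmin⟩ := xiOf_eq_of_mem hB ⟨q, hq⟩
  exact hmin q hq

lemma snd_le_of_ordA_le {q : ℕ × ℕ} {k t : ℕ} (hk : k ≤ n) (h : ordA n q ≤ ordA n (k, t)) :
    q.2 ≤ t := by
  by_contra! hlt
  have : (t + 1) * (n + 1) ≤ q.2 * (n + 1) := Nat.mul_le_mul_right _ hlt
  simp only [ordA, Nat.succ_mul] at h this
  omega

lemma notMem_filled_of_lt_snd {B : Finset (ℕ × ℕ)} {q : ℕ × ℕ}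
    (hcol : (xiOf n B).2 < q.2) (hrow : (xiOf n B).1 ≠ q.1) :
    q ∉ insert (xiOf n B) (minusSet n B ∪ plusSet n B) := by
  simp only [Finset.mem_insert, Finset.mem_union, minusSet, plusSet, Finset.mem_filter]
  rintro (rfl | ⟨-, h, -⟩ | ⟨-, h, -⟩) <;> omega

lemma Bset_subset_placesA_sdiff : ∀ l, Bset n M l ⊆ placesA n \ M
  | 0 => Finset.Subset.refl _
  | l + 1 => Finset.sdiff_subset.trans (Bset_subset_placesA_sdiff l)

lemma Bset_subset_placesA (l : ℕ) : Bset n M l ⊆ placesA n :=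
  (Bset_subset_placesA_sdiff l).trans Finset.sdiff_subset

lemma notMem_of_mem_Bset {l : ℕ} {q : ℕ × ℕ} (hq : q ∈ Bset n M l) : q ∉ M :=
  (Finset.mem_sdiff.1 (Bset_subset_placesA_sdiff l hq)).2

lemma Bset_antitone : Antitone (Bset n M) :=
  antitone_nat_of_succ_le fun _ => Finset.sdiff_subset

lemma snd_xiOf_Bset_le {l m k t : ℕ} (hlm : l ≤ m) (hkt : (k, t) ∈ Bset n M m) :
    (xiOf n (Bset n M l)).2 ≤ t :=
  snd_le_of_ordA_le (mem_placesA.1 (Bset_subset_placesA m hkt)).1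
    (ordA_xiOf_le (Bset_subset_placesA l) (Bset_antitone hlm hkt))

lemma IsIdealSet.mem_of_snd_le (hM : IsIdealSet n M) {a t d : ℕ} (hat : (a, t) ∈ M)
    (hd : 1 ≤ d) (hdt : d ≤ t) : (a, d) ∈ M := by
  rcases hdt.lt_or_eq with hlt | rfl
  · exact hM.2.1 _ hat d hd hlt
  · exact hat

/-- An `⊗` on row `a` would sit in a column `≤ t`, hence in `M` by the ideal property. -/
lemma mem_Bset_of_snd_gt (hM : IsIdealSet n M) {m k t a j : ℕ}
    (hkt : (k, t) ∈ Bset n M m) (hat : (a, t) ∈ M) (htj : t < j)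
    (haj : (a, j) ∈ placesA n \ M) : ∀ l ≤ m, (a, j) ∈ Bset n M l := by
  intro l
  induction l with
  | zero => exact fun _ => haj
  | succ l ih =>
    intro hl
    have hajl := ih (by omega)
    have hξ := xiOf_mem (Bset_subset_placesA l) ⟨_, hajl⟩
    have hξt := snd_xiOf_Bset_le (by omega : l ≤ m) hkt
    have hrow : (xiOf n (Bset n M l)).1 ≠ a := by
      intro hrow
      apply notMem_of_mem_Bset hξ
      rw [← Prod.mk.eta (p := xiOf n (Bset n M l)), hrow]
      exact hM.mem_of_snd_le hat (mem_placesA.1 (Bset_subset_placesA l hξ)).2.1 hξt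
    exact Finset.mem_sdiff.2 ⟨hajl, notMem_filled_of_lt_snd (by omega) hrow⟩

end Diagram

theorem remark_tail_unfilled_general
    (n s : ℕ) (M : Finset (ℕ × ℕ))
    (hM : IsIdealSet n M) (hs : IsNumSteps n M s)
    (i k t p : ℕ) (hi1 : 1 ≤ i) (his : i ≤ s)
    (hkt : xiStep n M i = (k, t)) (hkp : k < p)
    (hMp : ∀ j, (j, t) ∈ M ↔ p ≤ j ∧ j ≤ n) :
    ∀ a j, p ≤ a → a ≤ n → t < j → j ≤ k → (a, j) ∈ Bset n M (i - 1) ∪ M := by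
  intro a j hpa han htj hjk
  by_cases hajM : (a, j) ∈ M
  · exact Finset.mem_union_right _ hajM
  have hktB : (k, t) ∈ Bset n M (i - 1) :=
    hkt ▸ xiOf_mem (Bset_subset_placesA _) (hs.2 _ (by omega))
  have haj : (a, j) ∈ placesA n \ M :=
    Finset.mem_sdiff.2 ⟨mem_placesA.2 ⟨han, by omega, by omega⟩, hajM⟩
  exact Finset.mem_union_left _
    (mem_Bset_of_snd_gt hM hktB ((hMp a).2 ⟨hpa, han⟩) htj haj _ le_rfl)

/-- Every pair `(a,j)` with `p ≤ a ≤ n` and `t < j ≤ k` (where `ξ_i = (k,t)` and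
the elements of `M` in column `t` are exactly `{(j,t) : p ≤ j ≤ n}`) lies in
`A_{i−1} = B_{i−1} ⊔ M`. -/
theorem remark_tail_unfilled (K : Type*) [Field K] [CharZero K]
    (n s : ℕ) (hn : 2 ≤ n) (M : Finset (ℕ × ℕ))
    (hM : IsIdealSet n M) (hs : IsNumSteps n M s)
    (i k t p : ℕ) (hi1 : 1 ≤ i) (his : i ≤ s)
    (hkt : xiStep n M i = (k, t)) (hkp : k < p)
    (hMp : ∀ j, (j, t) ∈ M ↔ p ≤ j ∧ j ≤ n) :
    ∀ a j, p ≤ a → a ≤ n → t < j → j ≤ k → (a, j) ∈ Bset n M (i - 1) ∪ M :=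
  remark_tail_unfilled_general n s M hM hs i k t p hi1 his hkt hkp hMp

end Panov
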